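/- For all integers d with 0 ≤ d ≤ ⌊(n-1)/2⌋, the number of admissible pinnacle sets of the symmetric group S_n having cardinality at most d equals the binomial coefficient C(n-1, d). -/

import Mathlib

/-- The pinnacle set of a word `w : Fin n → ℤ`: values `w i` (for `0 < i < n-1`)
strictly larger than both neighbors. -/
def PinSet (n : ℕ) (w : Fin n → ℤ) : Set ℤ :=
  {x | ∃ (i : ℕ) (h0 : 0 < i) (h2 : i + 1 < n),
    w ⟨i, by omega⟩ = x ∧ w ⟨i - 1, by omega⟩ < w ⟨i, by omega⟩ ∧
      w ⟨i + 1, h2⟩ < w ⟨i, by omega⟩}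

/-- `w : Fin n → ℤ` is the one-line notation of a signed permutation of rank `n`:
the absolute values of its entries are distinct elements of `{1,...,n}`
(hence a bijection onto `{1,...,n}`). -/
def IsSignedPerm (n : ℕ) (w : Fin n → ℤ) : Prop :=
  (∀ i, 1 ≤ |w i| ∧ |w i| ≤ (n : ℤ)) ∧ Function.Injective fun i => |w i|

/-- `S` is an admissible pinnacle set of the hyperoctahedral group `B_n`. -/
def APSB (n : ℕ) (S : Finset ℤ) : Prop :=
  ∃ w : Fin n → ℤ, IsSignedPerm n w ∧ PinSet n w = ↑S

/-- `S` is an admissible pinnacle set of the type `D` group `D_n`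
(signed permutations with an even number of negative one-line entries). -/
def APSD (n : ℕ) (S : Finset ℤ) : Prop :=
  ∃ w : Fin n → ℤ, IsSignedPerm n w ∧
    Even (Finset.univ.filter fun i => w i < 0).card ∧ PinSet n w = ↑S

/-- `S` is an admissible pinnacle set of the symmetric group `S_n`
(an unsigned permutation is a signed permutation with all entries positive). -/
def APSA (n : ℕ) (S : Finset ℤ) : Prop :=
  ∃ w : Fin n → ℤ, IsSignedPerm n w ∧ (∀ i, 0 < w i) ∧ PinSet n w = ↑S

/-- `T` is an admissible pinnacle set of the totally ordered finite set `X ⊆ ℤ`: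
it is the pinnacle set of some arrangement of the elements of `X`. -/
def APSOn (X : Finset ℤ) (T : Finset ℤ) : Prop :=
  ∃ w : Fin X.card → ℤ, Function.Injective w ∧ (∀ i, w i ∈ X) ∧
    PinSet X.card w = ↑T

/-!
A set `S` is the pinnacle set of a permutation of `[n]` iff every `x ∈ S` satisfies `x ≤ n` and
`2 #{y ∈ S | y < x} + 2 < x`. Necessity: if the pinnacles `≤ x` sit at positions `P`, then the
positions in `P`, their right neighbours and the left neighbour of the first one are `2 #P + 1`
distinct positions carrying values in `[1, x]`. Sufficiency: interleave the elements of `S` with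
those of the complement, both in increasing order. Finally, the sets satisfying
the criterion with at most `d` elements obey Pascal's recursion in `n`, according as `n` belongs
to the set or not, whence the count `C(n - 1, d)`.
-/

namespace Finset

lemma insert_injOn_notMem {α : Type*} [DecidableEq α] (a : α) :
    Set.InjOn (insert a) {s : Finset α | a ∉ s} :=
  fun s hs t ht h => by rw [← erase_insert hs, h, erase_insert ht]

variable {α : Type*} [LinearOrder α] [Inhabited α] (F : Finset α) {j : ℕ}

/-- The `j`-th smallest element of `F`, counting from `0` (junk value `default` once `#F ≤ j`). -/
def sortedNth (j : ℕ) : α := (F.sort).getD j default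

lemma sortedNth_eq_getElem (hj : j < #F) :
    F.sortedNth j = (F.sort)[j]'(by rwa [length_sort]) :=
  List.getD_eq_getElem _ _ _

lemma sortedNth_mem (hj : j < #F) : F.sortedNth j ∈ F := by
  rw [sortedNth_eq_getElem F hj, ← mem_sort (· ≤ ·)]
  exact List.getElem_mem _

lemma sortedNth_strictMonoOn : StrictMonoOn F.sortedNth (Set.Iio #F) := by
  intro i hi j hj hij
  rw [sortedNth_eq_getElem F hi, sortedNth_eq_getElem F hj]
  exact (sortedLT_sort F).getElem_lt_getElem_iff.2 hij

lemma exists_sortedNth_eq {y : α} (hy : y ∈ F) : ∃ j < #F, F.sortedNth j = y := by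
  obtain ⟨j, hj, rfl⟩ := List.getElem_of_mem ((mem_sort (· ≤ ·)).2 hy)
  rw [length_sort] at hj
  exact ⟨j, hj, sortedNth_eq_getElem F hj⟩

lemma filter_lt_sortedNth (hj : j < #F) :
    {y ∈ F | y < F.sortedNth j} = (range j).image F.sortedNth := by
  ext y
  simp only [mem_filter, mem_image, mem_range]
  constructor
  · rintro ⟨hy, hlt⟩
    obtain ⟨i, hi, rfl⟩ := F.exists_sortedNth_eq hy
    exact ⟨i, (F.sortedNth_strictMonoOn.lt_iff_lt hi hj).1 hlt, rfl⟩
  · rintro ⟨i, hij, rfl⟩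
    exact ⟨F.sortedNth_mem (hij.trans hj), F.sortedNth_strictMonoOn (hij.trans hj) hj hij⟩

lemma card_filter_lt_sortedNth (hj : j < #F) : #{y ∈ F | y < F.sortedNth j} = j := by
  rw [filter_lt_sortedNth F hj, card_image_of_injOn, card_range]
  exact F.sortedNth_strictMonoOn.injOn.mono fun i hi => (mem_range.1 hi).trans hj

lemma sortedNth_lt_iff (hj : j < #F) {v : α} :
    F.sortedNth j < v ↔ j < #{y ∈ F | y < v} := by
  constructor
  · intro hv
    calc j < #(insert (F.sortedNth j) {y ∈ F | y < F.sortedNth j}) := by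
          rw [card_insert_of_notMem (by simp), card_filter_lt_sortedNth F hj]; omega
      _ ≤ #{y ∈ F | y < v} := card_le_card <| insert_subset
          (mem_filter.2 ⟨F.sortedNth_mem hj, hv⟩)
          (monotone_filter_right F fun _ _ hy => hy.trans hv)
  · intro hv
    by_contra! hle
    have := card_le_card (monotone_filter_right F
      (p := (· < v)) fun _ _ hy => hy.trans_le hle)
    rw [card_filter_lt_sortedNth F hj] at this
    omega

end Finset

open Finset

def IsPeak (n : ℕ) (f : ℕ → ℤ) (i : ℕ) : Prop :=
  0 < i ∧ i + 1 < n ∧ f (i - 1) < f i ∧ f (i + 1) < f i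

lemma pinSet_eq_image (n : ℕ) (f : ℕ → ℤ) :
    PinSet n (fun i => f i) = f '' {i | IsPeak n f i} := by
  ext x
  simp only [PinSet, IsPeak, Set.mem_ofPred_eq, Set.mem_image]
  constructor
  · rintro ⟨i, h0, h2, rfl, hl, hr⟩
    exact ⟨i, ⟨h0, h2, hl, hr⟩, rfl⟩
  · rintro ⟨i, ⟨h0, h2, hl, hr⟩, rfl⟩
    exact ⟨i, h0, h2, rfl, hl, hr⟩

lemma apsa_iff_exists_word {n : ℕ} {S : Finset ℤ} :
    APSA n S ↔ ∃ f : ℕ → ℤ, (∀ i < n, f i ∈ Icc 1 (n : ℤ)) ∧ Set.InjOn f (Set.Iio n) ∧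
      f '' {i | IsPeak n f i} = S := by
  constructor
  · rintro ⟨w, ⟨hbound, hinj⟩, hpos, hpin⟩
    have habs : ∀ i, |w i| = w i := fun i => abs_of_pos (hpos i)
    set f : ℕ → ℤ := fun i => if h : i < n then w ⟨i, h⟩ else 0
    have hf : w = fun i : Fin n => f i := funext fun i => by simp [f]
    refine ⟨f, fun i hi => ?_, fun i hi j hj hij => ?_, ?_⟩
    · simpa [f, hi, habs, mem_Icc] using hbound ⟨i, hi⟩
    · rw [Set.mem_Iio] at hi hj
      have := @hinj ⟨i, hi⟩ ⟨j, hj⟩ (by simpa [f, hi, hj, habs] using hij)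
      exact Fin.val_eq_of_eq this
    · rw [← pinSet_eq_image, ← hf, hpin]
  · rintro ⟨f, hmem, hinj, hpeak⟩
    have hpos : ∀ i : Fin n, 0 < f i := fun i => by
      have := mem_Icc.1 (hmem i i.isLt); omega
    have habs : ∀ i : Fin n, |f i| = f i := fun i => abs_of_pos (hpos i)
    refine ⟨fun i : Fin n => f i, ⟨fun i => ?_, fun i j hij => ?_⟩, hpos, ?_⟩
    · simpa [habs, mem_Icc] using hmem i i.isLt
    · simp only [habs] at hij
      exact Fin.ext (hinj i.isLt j.isLt hij)
    · rw [pinSet_eq_image, hpeak]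

lemma card_insert_pred_min'_union_image_succ {P : Finset ℕ} (hP : P.Nonempty)
    (hpos : ∀ i ∈ P, 0 < i) (hsep : ∀ i ∈ P, i + 1 ∉ P) :
    #(insert (P.min' hP - 1) (P ∪ P.image (· + 1))) = 2 * #P + 1 := by
  have hdisj : Disjoint P (P.image (· + 1)) := by
    simp only [disjoint_right, mem_image]
    rintro _ ⟨i, hi, rfl⟩
    exact hsep i hi
  have hmin := hpos _ (P.min'_mem hP)
  have hnotin : P.min' hP - 1 ∉ P ∪ P.image (· + 1) := by
    simp only [mem_union, mem_image, not_or, not_exists, not_and]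
    exact ⟨fun h => by have := P.min'_le _ h; omega,
      fun i hi _ => by have := P.min'_le _ hi; omega⟩
  rw [card_insert_of_notMem hnotin, card_union_of_disjoint hdisj,
    card_image_of_injective _ (add_left_injective 1)]
  ring

lemma two_mul_card_add_one_le_of_isPeak {n : ℕ} {f : ℕ → ℤ} (hpos : ∀ i < n, 0 < f i)
    (hinj : Set.InjOn f (Set.Iio n)) {P : Finset ℕ} (hP : P.Nonempty)
    (hpeak : ∀ i ∈ P, IsPeak n f i) {x : ℤ} (hx : ∀ i ∈ P, f i ≤ x) :
    2 * #P + 1 ≤ x := by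
  have hsep : ∀ i ∈ P, i + 1 ∉ P := fun i hi hi' => by
    have := (hpeak i hi).2.2.2
    have := (hpeak _ hi').2.2.1
    rw [Nat.add_sub_cancel] at this
    omega
  set Q := insert (P.min' hP - 1) (P ∪ P.image (· + 1))
  have hQ : ∀ q ∈ Q, q < n ∧ f q ≤ x := by
    simp only [Q, mem_insert, mem_union, mem_image]
    rintro q (rfl | hq | ⟨i, hi, rfl⟩)
    · obtain ⟨_, _, hl, -⟩ := hpeak _ (P.min'_mem hP)
      have := hx _ (P.min'_mem hP)
      exact ⟨by omega, by omega⟩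
    · obtain ⟨_, _, -, -⟩ := hpeak q hq
      exact ⟨by omega, hx q hq⟩
    · obtain ⟨_, _, -, hr⟩ := hpeak i hi
      have := hx i hi
      exact ⟨by omega, by omega⟩
  have hcard : #Q ≤ #(Icc 1 x) := by
    refine card_le_card_of_injOn f (fun q hq => ?_) (hinj.mono fun q hq => (hQ q hq).1)
    have := hpos q (hQ q hq).1
    exact mem_Icc.2 ⟨by omega, (hQ q hq).2⟩
  rw [card_insert_pred_min'_union_image_succ hP (fun i hi => (hpeak i hi).1) hsep,
    Int.card_Icc] at hcard
  omega

def PinnacleCriterion (n : ℕ) (S : Finset ℤ) : Prop :=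
  ∀ x ∈ S, x ≤ n ∧ 2 * #{y ∈ S | y < x} + 2 < x

lemma pinnacleCriterion_of_apsa {n : ℕ} {S : Finset ℤ} (h : APSA n S) :
    PinnacleCriterion n S := by
  classical
  obtain ⟨f, hmem, hinj, hS⟩ := apsa_iff_exists_word.1 h
  have hpos : ∀ i < n, 0 < f i := fun i hi => by have := mem_Icc.1 (hmem i hi); omega
  intro x hx
  obtain ⟨i₀, hi₀, rfl⟩ : x ∈ f '' {i | IsPeak n f i} := hS ▸ hx
  set P := {i ∈ range n | IsPeak n f i ∧ f i < f i₀}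
  have hP : P.image f = {y ∈ S | y < f i₀} := by
    ext y
    simp only [P, mem_image, mem_filter, mem_range, ← mem_coe (s := S), ← hS]
    constructor
    · rintro ⟨i, ⟨-, hi, hlt⟩, rfl⟩
      exact ⟨⟨i, hi, rfl⟩, hlt⟩
    · rintro ⟨⟨i, hi, rfl⟩, hlt⟩
      exact ⟨i, ⟨by have := hi.2.1; omega, hi, hlt⟩, rfl⟩
  have hcard : #P = #{y ∈ S | y < f i₀} := by
    rw [← hP, card_image_of_injOn (hinj.mono fun i hi => by simp [P] at hi; exact hi.1)]
  have hbound := two_mul_card_add_one_le_of_isPeak hpos hinj (insert_nonempty i₀ P)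
    (by simpa [P] using ⟨hi₀, fun i _ hi _ => hi⟩) (x := f i₀)
    (by simpa [P] using fun i _ _ hi => hi.le)
  rw [card_insert_of_notMem (by simp [P]), hcard] at hbound
  exact ⟨(mem_Icc.1 (hmem i₀ (by have := hi₀.2.1; omega))).2, by omega⟩

/-- The word `c₀ s₀ c₁ s₁ ⋯ c_{k-1} s_{k-1} c_k c_{k+1} ⋯`, where `s₀ < ⋯ < s_{k-1}` are the
elements of `S` and `c₀ < c₁ < ⋯` those of `[1, n] \ S`. -/
noncomputable def pinnacleWord (n : ℕ) (S : Finset ℤ) (i : ℕ) : ℤ :=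
  if i < 2 * #S then
    if i % 2 = 0 then (Icc 1 (n : ℤ) \ S).sortedNth (i / 2) else S.sortedNth (i / 2)
  else (Icc 1 (n : ℤ) \ S).sortedNth (i - #S)

section Construction

variable {n : ℕ} {S : Finset ℤ} {i j : ℕ}

lemma pinnacleWord_two_mul (hj : j ≤ #S) :
    pinnacleWord n S (2 * j) = (Icc 1 (n : ℤ) \ S).sortedNth j := by
  rcases hj.lt_or_eq with hj | rfl
  · simp [pinnacleWord, hj]
  · simp [pinnacleWord, two_mul]

lemma pinnacleWord_two_mul_add_one (hj : j < #S) :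
    pinnacleWord n S (2 * j + 1) = S.sortedNth j := by
  simp [pinnacleWord, show 2 * j + 1 < 2 * #S by omega, Nat.add_mod,
    show (2 * j + 1) / 2 = j by omega]

lemma pinnacleWord_of_le (hi : 2 * #S ≤ i) :
    pinnacleWord n S i = (Icc 1 (n : ℤ) \ S).sortedNth (i - #S) := by
  simp [pinnacleWord, hi.not_gt]

namespace PinnacleCriterion

variable (h : PinnacleCriterion n S)
include h

lemma subset_Icc : S ⊆ Icc 1 (n : ℤ) := fun x hx => mem_Icc.2 ⟨by linarith [h x hx], (h x hx).1⟩

lemma card_compl : #(Icc 1 (n : ℤ) \ S) = n - #S := by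
  rw [card_sdiff_of_subset h.subset_Icc, Int.card_Icc]
  omega

lemma le_sortedNth (hj : j < #S) : 2 * j + 3 ≤ S.sortedNth j := by
  have := (h _ (S.sortedNth_mem hj)).2
  rw [S.card_filter_lt_sortedNth hj] at this
  omega

lemma sortedNth_le (hj : j < #S) : S.sortedNth j ≤ n := (h _ (S.sortedNth_mem hj)).1

lemma card_le : #S ≤ (n - 1) / 2 := by
  rcases Nat.eq_zero_or_pos #S with hS | hS
  · omega
  · have := h.le_sortedNth (j := #S - 1) (by omega)
    have := h.sortedNth_le (j := #S - 1) (by omega)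
    omega

lemma compl_sortedNth_succ_lt (hj : j < #S) :
    (Icc 1 (n : ℤ) \ S).sortedNth (j + 1) < S.sortedNth j := by
  set v := S.sortedNth j
  have hv := h.le_sortedNth hj
  have hvn := h.sortedNth_le hj
  have hsplit : {y ∈ Icc 1 (n : ℤ) \ S | y < v} ∪ {y ∈ S | y < v} = Ico 1 v := by
    ext y
    simp only [mem_union, mem_filter, mem_sdiff, mem_Icc, mem_Ico]
    constructor
    · rintro (⟨⟨⟨h1, -⟩, -⟩, hy⟩ | ⟨hyS, hy⟩)
      · exact ⟨h1, hy⟩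
      · exact ⟨(mem_Icc.1 (h.subset_Icc hyS)).1, hy⟩
    · rintro ⟨h1, hy⟩
      by_cases hyS : y ∈ S
      · exact .inr ⟨hyS, hy⟩
      · exact .inl ⟨⟨⟨h1, by omega⟩, hyS⟩, hy⟩
  have hdisj : Disjoint (Icc 1 (n : ℤ) \ S) S := sdiff_disjoint
  have hcard := card_union_of_disjoint (disjoint_filter_filter (p := (· < v)) (q := (· < v)) hdisj)
  rw [hsplit, Int.card_Ico, S.card_filter_lt_sortedNth hj] at hcard
  have := h.card_le
  rw [sortedNth_lt_iff _ (by rw [h.card_compl]; omega)]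
  omega


lemma pinnacleWord_mem (hi : i < n) : pinnacleWord n S i ∈ Icc 1 (n : ℤ) := by
  have := h.card_le
  have hC := h.card_compl
  rcases lt_or_ge i (2 * #S) with hik | hik
  · obtain ⟨j, rfl | rfl⟩ := Nat.even_or_odd' i
    · rw [pinnacleWord_two_mul (by omega)]
      exact mem_sdiff.1 (sortedNth_mem _ (by omega)) |>.1
    · rw [pinnacleWord_two_mul_add_one (by omega)]
      exact h.subset_Icc (sortedNth_mem _ (by omega))
  · rw [pinnacleWord_of_le hik]
    exact mem_sdiff.1 (sortedNth_mem _ (by omega)) |>.1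

lemma surjOn_pinnacleWord :
    Set.SurjOn (pinnacleWord n S) (Set.Iio n) (Icc 1 (n : ℤ)) := by
  have := h.card_le
  intro y hy
  by_cases hyS : y ∈ S
  · obtain ⟨j, hj, rfl⟩ := S.exists_sortedNth_eq hyS
    have := h.le_sortedNth hj
    have := h.sortedNth_le hj
    exact ⟨2 * j + 1, by simp only [Set.mem_Iio]; omega, pinnacleWord_two_mul_add_one hj⟩
  · obtain ⟨t, ht, rfl⟩ := (Icc 1 (n : ℤ) \ S).exists_sortedNth_eq (mem_sdiff.2 ⟨hy, hyS⟩)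
    rw [h.card_compl] at ht
    rcases lt_or_ge t #S with htk | htk
    · exact ⟨2 * t, by simp only [Set.mem_Iio]; omega, pinnacleWord_two_mul htk.le⟩
    · refine ⟨t + #S, by simp only [Set.mem_Iio]; omega, ?_⟩
      rw [pinnacleWord_of_le (by omega), Nat.add_sub_cancel]

lemma injOn_pinnacleWord : Set.InjOn (pinnacleWord n S) (Set.Iio n) := by
  have := injOn_of_surjOn_of_card_le (s := range n) (pinnacleWord n S)
    (fun i hi => h.pinnacleWord_mem (mem_range.1 hi))
    (by simpa using h.surjOn_pinnacleWord) (by simp)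
  simpa using this

lemma isPeak_pinnacleWord_iff : IsPeak n (pinnacleWord n S) i ↔ ∃ j < #S, i = 2 * j + 1 := by
  have := h.card_le
  have hC := h.card_compl
  constructor
  · rintro ⟨h0, hn, hl, hr⟩
    rcases lt_or_ge i (2 * #S) with hik | hik
    · obtain ⟨j, rfl | rfl⟩ := Nat.even_or_odd' i
      · obtain ⟨j, rfl⟩ : ∃ j', j = j' + 1 := ⟨j - 1, by omega⟩
        rw [show 2 * (j + 1) - 1 = 2 * j + 1 by omega, pinnacleWord_two_mul_add_one (by omega),
          pinnacleWord_two_mul (by omega)] at hl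
        exact absurd hl (h.compl_sortedNth_succ_lt (by omega)).not_gt
      · exact ⟨j, by omega, rfl⟩
    · rw [pinnacleWord_of_le hik, pinnacleWord_of_le (by omega)] at hr
      exact absurd hr ((sortedNth_strictMonoOn _ (by simp only [Set.mem_Iio]; omega)
        (by simp only [Set.mem_Iio]; omega) (by omega)).not_gt)
  · rintro ⟨j, hj, rfl⟩
    have := h.le_sortedNth hj
    have := h.sortedNth_le hj
    have hlt := h.compl_sortedNth_succ_lt hj
    refine ⟨by omega, by omega, ?_, ?_⟩
    · rw [Nat.add_sub_cancel, pinnacleWord_two_mul hj.le, pinnacleWord_two_mul_add_one hj]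
      exact lt_trans (sortedNth_strictMonoOn _ (by simp only [Set.mem_Iio]; omega)
        (by simp only [Set.mem_Iio]; omega) (by omega)) hlt
    · rwa [show 2 * j + 1 + 1 = 2 * (j + 1) by ring, pinnacleWord_two_mul hj,
        pinnacleWord_two_mul_add_one hj]

lemma image_peaks_pinnacleWord : pinnacleWord n S '' {i | IsPeak n (pinnacleWord n S) i} = S := by
  ext y
  simp only [h.isPeak_pinnacleWord_iff, Set.mem_image, Set.mem_ofPred_eq, mem_coe]
  constructor
  · rintro ⟨_, ⟨j, hj, rfl⟩, rfl⟩
    rw [pinnacleWord_two_mul_add_one hj]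
    exact sortedNth_mem _ hj
  · intro hy
    obtain ⟨j, hj, rfl⟩ := S.exists_sortedNth_eq hy
    exact ⟨2 * j + 1, ⟨j, hj, rfl⟩, pinnacleWord_two_mul_add_one hj⟩

end PinnacleCriterion

end Construction

theorem apsa_iff_pinnacleCriterion {n : ℕ} {S : Finset ℤ} : APSA n S ↔ PinnacleCriterion n S :=
  ⟨pinnacleCriterion_of_apsa, fun h => apsa_iff_exists_word.2
    ⟨pinnacleWord n S, fun _ hi => h.pinnacleWord_mem hi, h.injOn_pinnacleWord,
      h.image_peaks_pinnacleWord⟩⟩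

section Counting

variable {n d : ℕ} {S : Finset ℤ}

lemma PinnacleCriterion.succ_iff_of_notMem (hS : (n + 1 : ℤ) ∉ S) :
    PinnacleCriterion (n + 1) S ↔ PinnacleCriterion n S := by
  refine forall₂_congr fun x hx => and_congr_left' ?_
  have : x ≠ n + 1 := fun h => hS (h ▸ hx)
  push_cast
  omega

lemma PinnacleCriterion.insert_succ_iff (hS : (n + 1 : ℤ) ∉ S) :
    PinnacleCriterion (n + 1) (insert (n + 1 : ℤ) S) ↔
      PinnacleCriterion n S ∧ 2 * #S + 2 < n + 1 := by
  have hlt : ∀ x ∈ S, x ≤ n + 1 → x < n + 1 := fun x hx hle =>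
    hle.lt_of_ne fun h => hS (h ▸ hx)
  have hfilter : ∀ x ≤ (n + 1 : ℤ), {y ∈ insert (n + 1 : ℤ) S | y < x} = {y ∈ S | y < x} :=
    fun x hx => by rw [filter_insert, if_neg hx.not_gt]
  simp only [PinnacleCriterion, forall_mem_insert, Nat.cast_add, Nat.cast_one]
  constructor
  · rintro ⟨⟨-, hN⟩, hS⟩
    have hall : ∀ x ∈ S, x < n + 1 := fun x hx => hlt x hx (hS x hx).1
    rw [hfilter _ le_rfl, filter_true_of_mem hall] at hN
    refine ⟨fun x hx => ?_, by exact_mod_cast hN⟩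
    have := hS x hx
    rw [hfilter x this.1] at this
    exact ⟨by linarith [hall x hx], this.2⟩
  · rintro ⟨hS, hcard⟩
    have hall : ∀ x ∈ S, x < n + 1 := fun x hx => by linarith [(hS x hx).1]
    rw [hfilter _ le_rfl, filter_true_of_mem hall]
    refine ⟨⟨le_rfl, by exact_mod_cast hcard⟩, fun x hx => ?_⟩
    rw [hfilter x (hall x hx).le]
    exact ⟨by linarith [(hS x hx).1], (hS x hx).2⟩

instance {n : ℕ} : DecidablePred (PinnacleCriterion n) :=
  fun S => inferInstanceAs (Decidable (∀ x ∈ S, _))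

noncomputable def criterionSets (n d : ℕ) : Finset (Finset ℤ) :=
  {S ∈ (Icc 1 (n : ℤ)).powerset | PinnacleCriterion n S ∧ #S ≤ d}

lemma mem_criterionSets : S ∈ criterionSets n d ↔ PinnacleCriterion n S ∧ #S ≤ d := by
  simp only [criterionSets, mem_filter, mem_powerset, and_iff_right_iff_imp]
  exact fun h => h.1.subset_Icc

lemma succ_notMem_of_mem_criterionSets (hS : S ∈ criterionSets n d) : (n + 1 : ℤ) ∉ S :=
  fun h => by linarith [(mem_criterionSets.1 hS).1 _ h]

lemma criterionSets_zero : criterionSets n 0 = {∅} := by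
  ext S
  simp only [mem_criterionSets, mem_singleton, Nat.le_zero, card_eq_zero, and_iff_right_iff_imp]
  rintro rfl
  simp [PinnacleCriterion]

lemma criterionSets_succ_of_le (hd : (n - 1) / 2 ≤ d) :
    criterionSets n (d + 1) = criterionSets n d := by
  ext S
  simp only [mem_criterionSets, and_congr_right_iff]
  exact fun h => ⟨fun _ => h.card_le.trans hd, fun h' => h'.trans d.le_succ⟩

lemma criterionSets_succ_succ (hd : 2 * d + 2 ≤ n) :
    criterionSets (n + 1) (d + 1) =
      criterionSets n (d + 1) ∪ (criterionSets n d).image (insert (n + 1 : ℤ)) := by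
  ext S
  simp only [mem_union, mem_image]
  by_cases hN : (n + 1 : ℤ) ∈ S
  · obtain ⟨T, hT, rfl⟩ : ∃ T, (n + 1 : ℤ) ∉ T ∧ S = insert (n + 1 : ℤ) T :=
      ⟨S.erase _, notMem_erase _ _, (insert_erase hN).symm⟩
    rw [or_iff_right (succ_notMem_of_mem_criterionSets · (mem_insert_self _ _))]
    simp only [mem_criterionSets, PinnacleCriterion.insert_succ_iff hT, card_insert_of_notMem hT]
    constructor
    · rintro ⟨⟨h, -⟩, hcard⟩
      exact ⟨T, ⟨h, by omega⟩, rfl⟩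
    · rintro ⟨U, hU, hUT⟩
      obtain rfl := insert_injOn_notMem _ (succ_notMem_of_mem_criterionSets
        (mem_criterionSets.2 hU)) hT hUT
      exact ⟨⟨hU.1, by omega⟩, by omega⟩
  · simp only [mem_criterionSets, PinnacleCriterion.succ_iff_of_notMem hN]
    rw [or_iff_left]
    rintro ⟨U, -, rfl⟩
    exact hN (mem_insert_self _ _)

lemma card_criterionSets (hd : d ≤ (n - 1) / 2) : #(criterionSets n d) = (n - 1).choose d := by
  induction n generalizing d with
  | zero =>
    obtain rfl : d = 0 := by omega
    simp [criterionSets_zero]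
  | succ n ih =>
    cases d with
    | zero => simp [criterionSets_zero]
    | succ d =>
      have hinj : Set.InjOn (insert (n + 1 : ℤ)) (criterionSets n d : Set (Finset ℤ)) :=
        (insert_injOn_notMem _).mono fun _ hU => succ_notMem_of_mem_criterionSets hU
      have hdisj : Disjoint (criterionSets n (d + 1))
          ((criterionSets n d).image (insert (n + 1 : ℤ))) := by
        simp only [disjoint_right, mem_image]
        rintro _ ⟨U, -, rfl⟩ hU
        exact succ_notMem_of_mem_criterionSets hU (mem_insert_self _ _)
      obtain ⟨m, rfl⟩ : ∃ m, n = m + 1 := ⟨n - 1, by omega⟩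
      rw [criterionSets_succ_succ (by omega), card_union_of_disjoint hdisj,
        card_image_of_injOn hinj, ih (d := d) (by omega)]
      simp only [Nat.add_sub_cancel]
      rw [Nat.choose_succ_succ' m d]
      rcases le_or_gt (d + 1) (m / 2) with hd' | hd'
      · rw [ih (by simpa using hd'), Nat.add_sub_cancel, add_comm]
      · obtain rfl : m = 2 * d + 1 := by omega
        rw [criterionSets_succ_of_le (by omega), ih (by omega), Nat.add_sub_cancel,
          Nat.choose_symm_half]

end Counting

theorem stmt6 (n d : ℕ) (hd : d ≤ (n - 1) / 2) :
    {S : Finset ℤ | APSA n S ∧ S.card ≤ d}.ncard = Nat.choose (n - 1) d := by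
  have : {S : Finset ℤ | APSA n S ∧ S.card ≤ d} = criterionSets n d := by
    ext S
    simp [mem_criterionSets, apsa_iff_pinnacleCriterion]
  rw [this, Set.ncard_coe_finset, card_criterionSets hd]
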